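/- Let (A, M, H1) be a sparse approximation triple with sparse approximation ratio a_A. Then for every x ∈ M and every best approximator x_{A,M} ∈ A of x with respect to ‖·‖_M, one has ‖x − x_{A,M}‖_{H1} ≤ √a_A·‖x‖_M. -/

import Mathlib

/-- A set-valued "best approximator": `y` is a best approximation of `x` in `K` (w.r.t. the norm
of `M`). -/
def IsBestApprox {M : Type*} [NormedAddCommGroup M] (K : Set M) (x y : M) : Prop :=
  y ∈ K ∧ ∀ z ∈ K, ‖x - y‖ ≤ ‖x - z‖

/-- A sparse approximation triple `(A, M, H1)`: the Banach space `M` is continuously embedded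
into the Hilbert space `H1` via `j` with embedding norm at most one, `A = ⋃ i, A_i` is a union of
closed linear subspaces, every nonempty closed subset of `M` is proximinal, best approximators
onto each `A_i` w.r.t. the `M`-norm are also best approximators w.r.t. the `H1`-norm, the norms
split along such best approximators, and `⋃_{k ≥ 1} kA` is dense in `H1`. -/
structure SparseApproxTriple (H1 : Type*) [NormedAddCommGroup H1] [InnerProductSpace ℝ H1]
    (M : Type*) [NormedAddCommGroup M] [NormedSpace ℝ M] (I : Type*) where
  /-- the (injective, norm at most one) embedding of `M` into `H1` -/
  j : M →ₗ[ℝ] H1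
  j_inj : Function.Injective j
  j_norm_le : ∀ x : M, ‖j x‖ ≤ ‖x‖
  /-- the subspaces whose union is `A` -/
  Asub : I → Submodule ℝ M
  index_nonempty : Nonempty I
  Asub_closed : ∀ i : I, IsClosed (Asub i : Set M)
  A_closed : IsClosed (⋃ i : I, (Asub i : Set M))
  /-- proximinality: every nonempty closed subset of `M` is proximinal -/
  prox : ∀ K : Set M, K.Nonempty → IsClosed K → ∀ x : M, ∃ y ∈ K, ∀ z ∈ K, ‖x - y‖ ≤ ‖x - z‖
  /-- common best approximator property -/
  common_best : ∀ (i : I) (x y : M), y ∈ Asub i → (∀ z ∈ Asub i, ‖x - y‖ ≤ ‖x - z‖) →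
    ∀ z ∈ Asub i, ‖j x - j y‖ ≤ ‖j x - j z‖
  /-- norm splitting in `M` -/
  norm_split_M : ∀ (i : I) (x y : M), y ∈ Asub i → (∀ z ∈ Asub i, ‖x - y‖ ≤ ‖x - z‖) →
    ‖x‖ = ‖y‖ + ‖x - y‖
  /-- norm splitting in `H1` -/
  norm_split_H : ∀ (i : I) (x y : M), y ∈ Asub i → (∀ z ∈ Asub i, ‖x - y‖ ≤ ‖x - z‖) →
    ‖j x‖ ^ 2 = ‖j y‖ ^ 2 + ‖j x - j y‖ ^ 2
  /-- the embedding of `A` into `M` is bounded (so that the sparsity `s_A` is finite) -/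
  sA_bddAbove : BddAbove
    {r : ℝ | ∃ x : M, x ∈ (⋃ i : I, (Asub i : Set M)) ∧ x ≠ 0 ∧ r = ‖x‖ / ‖j x‖}
  /-- sparse density: `⋃_{k ≥ 1} kA` is dense in `H1` -/
  sparse_dense : Dense (⋃ k : ℕ, {u : H1 | ∃ f : Fin (k + 1) → M,
    (∀ n, f n ∈ ⋃ i : I, (Asub i : Set M)) ∧ u = ∑ n, j (f n)})

namespace SparseApproxTriple

variable {H1 : Type*} [NormedAddCommGroup H1] [InnerProductSpace ℝ H1]
  {M : Type*} [NormedAddCommGroup M] [NormedSpace ℝ M] {I : Type*}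

/-- The union `A = ⋃ i, A_i`, as a subset of `M`. -/
def A (S : SparseApproxTriple H1 M I) : Set M := ⋃ i : I, (S.Asub i : Set M)

/-- `σ_{A,M}(x) := inf_{z ∈ A} ‖x − z‖_M`, the best sparse approximation error. -/
noncomputable def sigma (S : SparseApproxTriple H1 M I) (x : M) : ℝ :=
  sInf ((fun z => ‖x - z‖) '' S.A)

/-- The sparsity `s_A := (sup_{0 ≠ x ∈ A} ‖x‖_M/‖x‖_{H1})²`. -/
noncomputable def sA (S : SparseApproxTriple H1 M I) : ℝ :=
  (sSup {r : ℝ | ∃ x : M, x ∈ S.A ∧ x ≠ 0 ∧ r = ‖x‖ / ‖S.j x‖}) ^ 2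

/-- The sparse approximation ratio
`a_A := sup_{0 ≠ x ∈ M} (‖u_{A,M}‖_{H1}/‖x_{A,M}‖_M)²`, where `x_{A,M}` is a best approximator
of `x` in `A` and `u_{A,M}` a best approximator of `x − x_{A,M}` in `A` (both w.r.t. the norm of
`M`). -/
noncomputable def aA (S : SparseApproxTriple H1 M I) : ℝ :=
  sSup {r : ℝ | ∃ x xa u : M, x ≠ 0 ∧ IsBestApprox S.A x xa ∧
    IsBestApprox S.A (x - xa) u ∧ r = (‖S.j u‖ / ‖xa‖) ^ 2}

/-- `kA := {x₁ + ⋯ + x_k : x₁, …, x_k ∈ A}`. -/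
def sumSet (S : SparseApproxTriple H1 M I) (k : ℕ) : Set M :=
  {x : M | ∃ f : Fin k → M, (∀ n, f n ∈ S.A) ∧ x = ∑ n, f n}

end SparseApproxTriple

/-!
Run the greedy algorithm from `x`: `r₀ = x`, `r₁ = x - y`, and `r (n + 1)` is `r n` minus a best
approximation of `r n` in `A`. Splitting of the `M`-norm makes the pieces `r n - r (n + 1)` sum in
norm to at most `‖x‖`, so the residuals converge in the complete space `M`. Their limit has `0` as
best approximation, so by the common best approximator property its image in `H1` is orthogonal
to `A`, hence zero by sparse density. Splitting of the `H1`-norm then writes `‖x - y‖²_{H1}` as the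
sum of the squares `‖r (n + 1) - r (n + 2)‖²_{H1}`, each at most `a_A ‖r n - r (n + 1)‖²_M`, and
`∑ ‖r n - r (n + 1)‖² ≤ (∑ ‖r n - r (n + 1)‖)² ≤ ‖x‖²`.
-/

open Filter Topology
open scoped InnerProductSpace

section InnerProduct

variable {F : Type*} [NormedAddCommGroup F] [InnerProductSpace ℝ F]

theorem real_inner_eq_zero_of_forall_norm_le_norm_sub_smul {v w : F}
    (h : ∀ t : ℝ, ‖v‖ ≤ ‖v - t • w‖) : ⟪v, w⟫_ℝ = 0 := by
  set c := ⟪v, w⟫_ℝ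
  -- expand `‖v - t • w‖² = ‖v‖² - 2t⟪v, w⟫ + t²‖w‖²` at `t = c / (‖w‖² + 1)`
  have hsq := pow_le_pow_left₀ (norm_nonneg v) (h (c / (‖w‖ ^ 2 + 1))) 2
  rw [norm_sub_sq_real, real_inner_smul_right, norm_smul, mul_pow, Real.norm_eq_abs, sq_abs]
    at hsq
  have hpos : 0 < ‖w‖ ^ 2 + 1 := by positivity
  have hc : c ^ 2 * (‖w‖ ^ 2 + 2) ≤ 0 := by
    field_simp at hsq
    nlinarith
  have : c ^ 2 = 0 := le_antisymm (nonpos_of_mul_nonpos_left hc (by positivity)) (sq_nonneg c)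
  exact pow_eq_zero_iff two_ne_zero |>.1 this

end InnerProduct

namespace SparseApproxTriple

variable {H1 : Type*} [NormedAddCommGroup H1] [InnerProductSpace ℝ H1]
  {M : Type*} [NormedAddCommGroup M] [NormedSpace ℝ M] {I : Type*}
  (S : SparseApproxTriple H1 M I)

theorem zero_mem_A : (0 : M) ∈ S.A :=
  let ⟨i⟩ := S.index_nonempty
  Set.mem_iUnion.2 ⟨i, (S.Asub i).zero_mem⟩

theorem exists_isBestApprox (x : M) : ∃ y, IsBestApprox S.A x y :=
  S.prox S.A ⟨0, S.zero_mem_A⟩ S.A_closed x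

theorem continuous_j : Continuous S.j :=
  AddMonoidHomClass.continuous_of_bound S.j 1 fun x => by simpa using S.j_norm_le x

variable {S}

theorem exists_index_of_isBestApprox {x y : M} (h : IsBestApprox S.A x y) :
    ∃ i, y ∈ S.Asub i ∧ ∀ z ∈ S.Asub i, ‖x - y‖ ≤ ‖x - z‖ :=
  let ⟨i, hi⟩ := Set.mem_iUnion.1 h.1
  ⟨i, hi, fun z hz => h.2 z (Set.mem_iUnion.2 ⟨i, hz⟩)⟩

theorem norm_eq_add_of_isBestApprox {x y : M} (h : IsBestApprox S.A x y) :
    ‖x‖ = ‖y‖ + ‖x - y‖ :=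
  let ⟨i, hi, hb⟩ := exists_index_of_isBestApprox h
  S.norm_split_M i x y hi hb

theorem norm_sq_j_eq_add_of_isBestApprox {x y : M} (h : IsBestApprox S.A x y) :
    ‖S.j x‖ ^ 2 = ‖S.j y‖ ^ 2 + ‖S.j (x - y)‖ ^ 2 := by
  obtain ⟨i, hi, hb⟩ := exists_index_of_isBestApprox h
  rw [map_sub]
  exact S.norm_split_H i x y hi hb

theorem eq_zero_of_isBestApprox_zero {y : M} (h : IsBestApprox S.A 0 y) : y = 0 := by
  simpa using h.2 0 S.zero_mem_A

theorem norm_le_of_isBestApprox_sub {x xa u : M} (hxa : IsBestApprox S.A x xa)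
    (hu : IsBestApprox S.A (x - xa) u) : ‖u‖ ≤ ‖xa‖ := by
  have hmin := hxa.2 u hu.1
  have hsplit := norm_eq_add_of_isBestApprox hu
  have htri : ‖x - u‖ - ‖xa‖ ≤ ‖x - xa - u‖ := by
    simpa only [sub_right_comm] using norm_sub_norm_le (x - u) xa
  linarith

variable (S) in
theorem bddAbove_aA_set : BddAbove {r : ℝ | ∃ x xa u : M, x ≠ 0 ∧ IsBestApprox S.A x xa ∧
    IsBestApprox S.A (x - xa) u ∧ r = (‖S.j u‖ / ‖xa‖) ^ 2} := by
  refine ⟨1, ?_⟩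
  rintro _ ⟨x, xa, u, -, hxa, hu, rfl⟩
  have hle : ‖S.j u‖ ≤ ‖xa‖ := (S.j_norm_le u).trans (norm_le_of_isBestApprox_sub hxa hu)
  exact pow_le_one₀ (by positivity) (div_le_one_of_le₀ hle (norm_nonneg xa))

variable (S) in
theorem aA_nonneg : 0 ≤ S.aA :=
  Real.sSup_nonneg fun _ ⟨_, _, _, _, _, _, h⟩ => h ▸ sq_nonneg _

theorem norm_sq_j_le_aA_mul {x xa u : M} (hxa : IsBestApprox S.A x xa)
    (hu : IsBestApprox S.A (x - xa) u) : ‖S.j u‖ ^ 2 ≤ S.aA * ‖xa‖ ^ 2 := by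
  rcases eq_or_ne xa 0 with rfl | hxa0
  · have : u = 0 := norm_le_zero_iff.1 (by simpa using norm_le_of_isBestApprox_sub hxa hu)
    simp [this]
  · have hx : x ≠ 0 := by
      rintro rfl
      exact hxa0 (eq_zero_of_isBestApprox_zero hxa)
    have hratio : (‖S.j u‖ / ‖xa‖) ^ 2 ≤ S.aA :=
      le_csSup S.bddAbove_aA_set ⟨x, xa, u, hx, hxa, hu, rfl⟩
    calc ‖S.j u‖ ^ 2 = (‖S.j u‖ / ‖xa‖) ^ 2 * ‖xa‖ ^ 2 := by
          field_simp [norm_ne_zero_iff.2 hxa0]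
      _ ≤ S.aA * ‖xa‖ ^ 2 := by gcongr

theorem j_eq_zero_of_isBestApprox_zero {x : M} (hx : IsBestApprox S.A x 0) : S.j x = 0 := by
  have horth : ∀ z ∈ S.A, ⟪S.j x, S.j z⟫_ℝ = 0 := by
    intro z hz
    obtain ⟨i, hzi⟩ := Set.mem_iUnion.1 hz
    have hbest := S.common_best i x 0 (S.Asub i).zero_mem
      fun w hw => hx.2 w (Set.mem_iUnion.2 ⟨i, hw⟩)
    refine real_inner_eq_zero_of_forall_norm_le_norm_sub_smul fun t => ?_
    simpa using hbest (t • z) ((S.Asub i).smul_mem t hzi)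
  refine S.sparse_dense.eq_zero_of_inner_left (𝕜 := ℝ) ?_
  intro u hu
  obtain ⟨k, f, hf, rfl⟩ := Set.mem_iUnion.1 hu
  rw [inner_sum]
  exact Finset.sum_eq_zero fun n _ => horth (f n) (hf n)

variable (S) in
def IsGreedy (r : ℕ → M) : Prop :=
  ∀ n, IsBestApprox S.A (r n) (r n - r (n + 1))

theorem exists_isGreedy {x y : M} (hy : IsBestApprox S.A x y) :
    ∃ r : ℕ → M, r 0 = x ∧ r 1 = x - y ∧ S.IsGreedy r := by
  choose best hbest using S.exists_isBestApprox
  let r : ℕ → M := fun n =>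
    Nat.rec (motive := fun _ => M) x (fun k q => if k = 0 then x - y else q - best q) n
  refine ⟨r, rfl, rfl, ?_⟩
  rintro (_ | k)
  · simpa [r] using hy
  · simpa [r] using hbest (r (k + 1))

namespace IsGreedy

variable {r : ℕ → M}

theorem sum_norm_sub_succ (hr : S.IsGreedy r) (n : ℕ) :
    ∑ k ∈ Finset.range n, ‖r k - r (k + 1)‖ = ‖r 0‖ - ‖r n‖ := by
  refine (Finset.sum_congr rfl fun k _ => ?_).trans (Finset.sum_range_sub' (‖r ·‖) n)
  have := norm_eq_add_of_isBestApprox (hr k)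
  rw [sub_sub_cancel] at this
  linarith

theorem sum_norm_sq_j_sub_succ (hr : S.IsGreedy r) (n : ℕ) :
    ∑ k ∈ Finset.range n, ‖S.j (r k - r (k + 1))‖ ^ 2 = ‖S.j (r 0)‖ ^ 2 - ‖S.j (r n)‖ ^ 2 := by
  refine (Finset.sum_congr rfl fun k _ => ?_).trans
    (Finset.sum_range_sub' (fun k => ‖S.j (r k)‖ ^ 2) n)
  have := norm_sq_j_eq_add_of_isBestApprox (hr k)
  rw [sub_sub_cancel] at this
  linarith

theorem norm_sq_j_sub_le (hr : S.IsGreedy r) (n : ℕ) :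
    ‖S.j (r 1)‖ ^ 2 - ‖S.j (r (n + 1))‖ ^ 2 ≤ S.aA * ‖r 0‖ ^ 2 := by
  have haA := S.aA_nonneg
  have hshift : S.IsGreedy fun k => r (k + 1) := fun k => hr (k + 1)
  have hpieces : ∑ k ∈ Finset.range n, ‖r k - r (k + 1)‖ ≤ ‖r 0‖ := by
    linarith [hr.sum_norm_sub_succ n, norm_nonneg (r n)]
  calc ‖S.j (r 1)‖ ^ 2 - ‖S.j (r (n + 1))‖ ^ 2
      = ∑ k ∈ Finset.range n, ‖S.j (r (k + 1) - r (k + 2))‖ ^ 2 :=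
        (hshift.sum_norm_sq_j_sub_succ n).symm
    _ ≤ ∑ k ∈ Finset.range n, S.aA * ‖r k - r (k + 1)‖ ^ 2 := by
        refine Finset.sum_le_sum fun k _ => norm_sq_j_le_aA_mul (hr k) ?_
        simpa using hr (k + 1)
    _ ≤ S.aA * (∑ k ∈ Finset.range n, ‖r k - r (k + 1)‖) ^ 2 := by
        rw [← Finset.mul_sum]
        gcongr
        exact Finset.sum_sq_le_sq_sum_of_nonneg fun _ _ => norm_nonneg _
    _ ≤ S.aA * ‖r 0‖ ^ 2 := by gcongr

theorem exists_tendsto [CompleteSpace M] (hr : S.IsGreedy r) : ∃ L, Tendsto r atTop (𝓝 L) := by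
  refine cauchySeq_tendsto_of_complete (cauchySeq_of_summable_dist ?_)
  refine summable_of_sum_range_le (c := ‖r 0‖) (fun _ => dist_nonneg) fun n => ?_
  simp only [dist_eq_norm]
  linarith [hr.sum_norm_sub_succ n, norm_nonneg (r n)]

theorem isBestApprox_zero_of_tendsto (hr : S.IsGreedy r) {L : M} (hL : Tendsto r atTop (𝓝 L)) :
    IsBestApprox S.A L 0 := by
  refine ⟨S.zero_mem_A, fun z hz => ?_⟩
  have hstep : ∀ n, ‖r (n + 1)‖ ≤ ‖r n - z‖ := fun n => by
    simpa using (hr n).2 z hz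
  simpa using le_of_tendsto_of_tendsto' ((hL.comp (tendsto_add_atTop_nat 1)).norm)
    (hL.sub_const z).norm hstep

theorem tendsto_j_zero [CompleteSpace M] (hr : S.IsGreedy r) :
    Tendsto (fun n => S.j (r n)) atTop (𝓝 0) := by
  obtain ⟨L, hL⟩ := hr.exists_tendsto
  rw [← j_eq_zero_of_isBestApprox_zero (hr.isBestApprox_zero_of_tendsto hL)]
  exact (S.continuous_j.tendsto L).comp hL

end IsGreedy

end SparseApproxTriple

theorem best_approx_H1_bound_general
    {H1 : Type*} [NormedAddCommGroup H1] [InnerProductSpace ℝ H1]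
    {M : Type*} [NormedAddCommGroup M] [NormedSpace ℝ M] [CompleteSpace M]
    {I : Type*} (S : SparseApproxTriple H1 M I)
    (x y : M) (hy : IsBestApprox S.A x y) :
    ‖S.j x - S.j y‖ ≤ Real.sqrt S.aA * ‖x‖ := by
  obtain ⟨r, hr0, hr1, hr⟩ := SparseApproxTriple.exists_isGreedy hy
  have hlim : Tendsto (fun n => ‖S.j (r 1)‖ ^ 2 - ‖S.j (r (n + 1))‖ ^ 2) atTop
      (𝓝 (‖S.j (r 1)‖ ^ 2)) := by
    simpa using ((hr.tendsto_j_zero.comp (tendsto_add_atTop_nat 1)).norm.pow 2).const_sub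
      (‖S.j (r 1)‖ ^ 2)
  have hsq : ‖S.j (r 1)‖ ^ 2 ≤ S.aA * ‖x‖ ^ 2 :=
    le_of_tendsto' hlim fun n => hr0 ▸ hr.norm_sq_j_sub_le n
  rw [← map_sub, ← hr1, ← Real.sqrt_sq (norm_nonneg x), ← Real.sqrt_mul' _ (sq_nonneg _)]
  exact Real.le_sqrt_of_sq_le hsq

/-- For a sparse approximation triple `(A, M, H1)`, every best approximator
`x_{A,M} ∈ A` of `x ∈ M` (w.r.t. the `M`-norm) satisfies
`‖x − x_{A,M}‖_{H1} ≤ √a_A · ‖x‖_M`. -/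
theorem best_approx_H1_bound
    {H1 : Type*} [NormedAddCommGroup H1] [InnerProductSpace ℝ H1] [CompleteSpace H1]
    {M : Type*} [NormedAddCommGroup M] [NormedSpace ℝ M] [CompleteSpace M]
    {I : Type*} (S : SparseApproxTriple H1 M I)
    (x y : M) (hy : IsBestApprox S.A x y) :
    ‖S.j x - S.j y‖ ≤ Real.sqrt S.aA * ‖x‖ :=
  best_approx_H1_bound_general S x y hy
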